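/- arXiv:2510.07504 — 8 statements merged into one kernel-verified Lean document; each statement's English description precedes it below -/
import Mathlib

section
/- In a vector space X over a nonarchimedean normed field K equipped with an ultrametric norm, two vectors x and y are norm-orthogonal (i.e., ‖αx + βy‖ = max(‖αx‖, ‖βy‖) for all scalars α, β) if and only if x is Birkhoff–James orthogonal to y and y is Birkhoff–James orthogonal to x, where x is Birkhoff–James orthogonal to y means ‖x‖ ≤ ‖x + αy‖ for all scalars α. -/
/-- In a vector space `X` over a complete nonarchimedean normed field `K`,
equipped with an ultrametric norm, two vectors `x` and `y` are norm-orthogonal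
(`‖α • x + β • y‖ = max ‖α • x‖ ‖β • y‖` for all scalars `α β`) if and only if
`x` is Birkhoff–James orthogonal to `y` and `y` is Birkhoff–James orthogonal to `x`. -/
theorem norm_orthogonal_iff_birkhoffJames
    {K X : Type*} [NormedField K] [IsUltrametricDist K] [CompleteSpace K]
    [NormedAddCommGroup X] [NormedSpace K X] [IsUltrametricDist X]
    (x y : X) :
    (∀ α β : K, ‖α • x + β • y‖ = max ‖α • x‖ ‖β • y‖) ↔
      ((∀ α : K, ‖x‖ ≤ ‖x + α • y‖) ∧ (∀ α : K, ‖y‖ ≤ ‖y + α • x‖)) := by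
  constructor
  · intro h
    constructor
    · intro α
      have := h 1 α
      simp only [one_smul] at this
      rw [this]
      exact le_max_left _ _
    · intro α
      have := h α 1
      simp only [one_smul] at this
      rw [add_comm] at this
      rw [this]
      exact le_max_right _ _
  · rintro ⟨hx, hy⟩ α β
    refine le_antisymm (IsUltrametricDist.norm_add_le_max _ _) (max_le ?_ ?_)
    · rcases eq_or_ne α 0 with rfl | hα
      · simp
      · have h := hx (α⁻¹ * β)
        calc ‖α • x‖ = ‖α‖ * ‖x‖ := norm_smul _ _
          _ ≤ ‖α‖ * ‖x + (α⁻¹ * β) • y‖ := by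
              exact mul_le_mul_of_nonneg_left h (norm_nonneg _)
          _ = ‖α • (x + (α⁻¹ * β) • y)‖ := (norm_smul _ _).symm
          _ = ‖α • x + β • y‖ := by
              rw [smul_add, smul_smul, mul_inv_cancel_left₀ hα]
    · rcases eq_or_ne β 0 with rfl | hβ
      · simp
      · have h := hy (β⁻¹ * α)
        calc ‖β • y‖ = ‖β‖ * ‖y‖ := norm_smul _ _
          _ ≤ ‖β‖ * ‖y + (β⁻¹ * α) • x‖ := by
              exact mul_le_mul_of_nonneg_left h (norm_nonneg _)
          _ = ‖β • (y + (β⁻¹ * α) • x)‖ := (norm_smul _ _).symm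
          _ = ‖α • x + β • y‖ := by
              rw [smul_add, smul_smul, mul_inv_cancel_left₀ hβ, add_comm]
end

section
/- Let H and K be ultrametric normed spaces over a nonarchimedean normed field. Define on the algebraic tensor product H ⊗ K the quantity ‖u‖_π := inf { max_{1≤i≤n} ‖xᵢ‖·‖yᵢ‖ : u = Σᵢ₌₁ⁿ xᵢ ⊗ yᵢ }. Then ‖·‖_π is an ultrametric seminorm: it is absolutely homogeneous (‖λu‖_π = |λ|·‖u‖_π) and satisfies ‖u + v‖_π ≤ max(‖u‖_π, ‖v‖_π). -/
open scoped TensorProduct Pointwise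

/-- The ultrametric projective seminorm on the algebraic tensor product of two
normed spaces over a nonarchimedean normed field:
`‖u‖_π = inf { maxᵢ ‖xᵢ‖·‖yᵢ‖ : u = Σᵢ xᵢ ⊗ yᵢ }`. -/
noncomputable def projNorm {F H K : Type*} [NormedField F]
    [NormedAddCommGroup H] [NormedSpace F H]
    [NormedAddCommGroup K] [NormedSpace F K] (u : H ⊗[F] K) : ℝ :=
  sInf {r : ℝ | ∃ (n : ℕ) (x : Fin n → H) (y : Fin n → K),
    u = ∑ i, x i ⊗ₜ[F] y i ∧ r = ⨆ i, ‖x i‖ * ‖y i‖}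

/-!
Concatenating representations of `u` and `v` gives a representation of `u + v` whose value is
the maximum of theirs, so the infimum inherits the strong triangle inequality. Scaling the left
factors of a representation of `u` by `c` gives one of `c • u` whose value is `‖c‖` times as
large, hence `‖c • u‖_π ≤ ‖c‖ ‖u‖_π`; applied to `c⁻¹` this becomes an equality.
-/

section

variable {F H K : Type*} [NormedField F]
    [NormedAddCommGroup H] [NormedSpace F H]
    [NormedAddCommGroup K] [NormedSpace F K]

def projNormValues (u : H ⊗[F] K) : Set ℝ :=
  {r : ℝ | ∃ (n : ℕ) (x : Fin n → H) (y : Fin n → K),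
    u = ∑ i, x i ⊗ₜ[F] y i ∧ r = ⨆ i, ‖x i‖ * ‖y i‖}

theorem projNorm_eq_sInf (u : H ⊗[F] K) : projNorm u = sInf (projNormValues u) := rfl

theorem nonneg_of_mem_projNormValues {u : H ⊗[F] K} {r : ℝ} (hr : r ∈ projNormValues u) :
    0 ≤ r := by
  obtain ⟨n, x, y, -, rfl⟩ := hr
  exact Real.iSup_nonneg fun i => mul_nonneg (norm_nonneg _) (norm_nonneg _)

theorem bddBelow_projNormValues (u : H ⊗[F] K) : BddBelow (projNormValues u) :=
  ⟨0, fun _ => nonneg_of_mem_projNormValues⟩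

theorem projNormValues_nonempty (u : H ⊗[F] K) : (projNormValues u).Nonempty := by
  obtain ⟨n, x, y, hu⟩ := TensorProduct.exists_sum_tmul_eq u
  exact ⟨_, n, x, y, hu, rfl⟩

theorem projNorm_nonneg (u : H ⊗[F] K) : 0 ≤ projNorm u :=
  Real.sInf_nonneg fun _ => nonneg_of_mem_projNormValues

theorem projNorm_le_of_mem {u : H ⊗[F] K} {r : ℝ} (hr : r ∈ projNormValues u) :
    projNorm u ≤ r :=
  csInf_le (bddBelow_projNormValues u) hr

theorem smul_mem_projNormValues {u : H ⊗[F] K} {r : ℝ} (hr : r ∈ projNormValues u) (c : F) :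
    ‖c‖ * r ∈ projNormValues (c • u) := by
  obtain ⟨n, x, y, rfl, rfl⟩ := hr
  refine ⟨n, fun i => c • x i, y, ?_, ?_⟩
  · simp only [Finset.smul_sum, TensorProduct.smul_tmul']
  · simp only [Real.mul_iSup_of_nonneg (norm_nonneg c), norm_smul, mul_assoc]

theorem projNorm_smul_le (c : F) (u : H ⊗[F] K) : projNorm (c • u) ≤ ‖c‖ * projNorm u := by
  rw [projNorm_eq_sInf, projNorm_eq_sInf, ← smul_eq_mul,
    ← Real.sInf_smul_of_nonneg (norm_nonneg c)]
  refine csInf_le_csInf (bddBelow_projNormValues _) ((projNormValues_nonempty u).smul_set) ?_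
  exact Set.smul_set_subset_iff.2 fun r hr => smul_mem_projNormValues hr c

theorem projNorm_smul (c : F) (u : H ⊗[F] K) : projNorm (c • u) = ‖c‖ * projNorm u := by
  refine le_antisymm (projNorm_smul_le c u) ?_
  rcases eq_or_ne c 0 with rfl | hc
  · simpa using projNorm_nonneg (0 : H ⊗[F] K)
  calc ‖c‖ * projNorm u = ‖c‖ * projNorm (c⁻¹ • c • u) := by rw [inv_smul_smul₀ hc]
    _ ≤ ‖c‖ * (‖c⁻¹‖ * projNorm (c • u)) := by gcongr; exact projNorm_smul_le _ _
    _ = projNorm (c • u) := by rw [norm_inv, mul_inv_cancel_left₀ (norm_ne_zero_iff.2 hc)]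

theorem projNorm_add_le_max_of_mem {u v : H ⊗[F] K} {r s : ℝ} (hr : r ∈ projNormValues u)
    (hs : s ∈ projNormValues v) : projNorm (u + v) ≤ max r s := by
  have hmax : 0 ≤ max r s := le_max_of_le_left (nonneg_of_mem_projNormValues hr)
  obtain ⟨n, x, y, rfl, rfl⟩ := hr
  obtain ⟨m, x', y', rfl, rfl⟩ := hs
  refine (projNorm_le_of_mem ⟨n + m, Fin.append x x', Fin.append y y', ?_, rfl⟩).trans ?_
  · simp [Fin.sum_univ_add]
  refine Real.iSup_le (Fin.addCases (fun j => ?_) (fun j => ?_)) hmax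
  · simp only [Fin.append_left]
    exact le_max_of_le_left
      (le_ciSup (f := fun i => ‖x i‖ * ‖y i‖) (Finite.bddAbove_range _) j)
  · simp only [Fin.append_right]
    exact le_max_of_le_right
      (le_ciSup (f := fun i => ‖x' i‖ * ‖y' i‖) (Finite.bddAbove_range _) j)

theorem projNorm_add_le_max (u v : H ⊗[F] K) :
    projNorm (u + v) ≤ max (projNorm u) (projNorm v) := by
  by_contra! h
  obtain ⟨r, hr, hr_lt⟩ :=
    exists_lt_of_csInf_lt (projNormValues_nonempty u) ((le_max_left _ _).trans_lt h)
  obtain ⟨s, hs, hs_lt⟩ :=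
    exists_lt_of_csInf_lt (projNormValues_nonempty v) ((le_max_right _ _).trans_lt h)
  exact (projNorm_add_le_max_of_mem hr hs).not_gt (max_lt hr_lt hs_lt)

end

theorem projNorm_is_ultrametric_seminorm_general
    {F H K : Type*} [NormedField F]
    [NormedAddCommGroup H] [NormedSpace F H]
    [NormedAddCommGroup K] [NormedSpace F K] :
    (∀ (c : F) (u : H ⊗[F] K), projNorm (c • u) = ‖c‖ * projNorm u) ∧
    (∀ u v : H ⊗[F] K, projNorm (u + v) ≤ max (projNorm u) (projNorm v)) :=
  ⟨projNorm_smul, projNorm_add_le_max⟩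

/-- For ultrametric normed spaces `H`, `K` over a nonarchimedean normed
field `F`, the quantity `‖·‖_π` is an ultrametric seminorm on `H ⊗ K`: it is absolutely
homogeneous and satisfies the strong triangle inequality. -/
theorem projNorm_is_ultrametric_seminorm
    {F H K : Type*} [NormedField F] [IsUltrametricDist F]
    [NormedAddCommGroup H] [NormedSpace F H] [IsUltrametricDist H]
    [NormedAddCommGroup K] [NormedSpace F K] [IsUltrametricDist K] :
    (∀ (c : F) (u : H ⊗[F] K), projNorm (c • u) = ‖c‖ * projNorm u) ∧
    (∀ u v : H ⊗[F] K, projNorm (u + v) ≤ max (projNorm u) (projNorm v)) :=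
  projNorm_is_ultrametric_seminorm_general
end

section
/- Let H and K be ultrametric normed spaces over a nonarchimedean field, and let {x₁, …, xₙ} be a finite norm-orthogonal system in H. Then for any y₁, …, yₙ ∈ K, the projective norm satisfies ‖Σᵢ xᵢ ⊗ yᵢ‖_π = maxᵢ ‖xᵢ‖·‖yᵢ‖. -/
open scoped TensorProduct

/-!
Let `∑ xᵢ ⊗ yᵢ = ∑ aⱼ ⊗ bⱼ`. Applying `id ⊗ g` for an arbitrary (not necessarily continuous)
linear functional `g` on `K` gives `∑ g(yᵢ) • xᵢ = ∑ g(bⱼ) • aⱼ`, so orthogonality and the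
ultrametric inequality in `H` give `‖xᵢ‖ ‖g yᵢ‖ ≤ maxⱼ ‖aⱼ‖ ‖g bⱼ‖` for every `g`.
A bound `‖g y‖ ≤ maxⱼ dⱼ ‖g bⱼ‖` for all functionals forces `y = ∑ βⱼ bⱼ` with `‖βⱼ‖ ≤ dⱼ`:
if the `bⱼ` are independent, `βⱼ` is the `j`-th coordinate of `y`; otherwise, in a linear
relation among the `bⱼ`, the vector whose coefficient is largest relative to its weight is
dominated by the others for every `g` and can be dropped. With `dⱼ = ‖xᵢ‖⁻¹ ‖aⱼ‖` the ultrametric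
inequality in `K` then gives `‖xᵢ‖ ‖yᵢ‖ ≤ maxⱼ ‖aⱼ‖ ‖bⱼ‖`.
-/

theorem IsUltrametricDist.norm_sum_le_iSup {ι E : Type*} [Fintype ι] [SeminormedAddCommGroup E]
    [IsUltrametricDist E] (f : ι → E) : ‖∑ i, f i‖ ≤ ⨆ i, ‖f i‖ :=
  norm_sum_le_of_forall_le_of_nonneg (Real.iSup_nonneg fun _ ↦ norm_nonneg _)
    fun i _ ↦ le_ciSup (Finite.bddAbove_range fun i ↦ ‖f i‖) i

theorem LinearIndependent.exists_linearMap_apply_sum_smul {ι F V : Type*} [Fintype ι] [Field F]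
    [AddCommGroup V] [Module F V] {v : ι → V} (hv : LinearIndependent F v) :
    ∃ L : V →ₗ[F] ι → F, ∀ c, L (∑ i, c i • v i) = c := by
  obtain ⟨L, hL⟩ := (Fintype.linearCombination F v).exists_leftInverse_of_injective
    (LinearMap.ker_eq_bot.mpr hv.fintypeLinearCombination_injective)
  refine ⟨L, fun c ↦ ?_⟩
  simpa only [LinearMap.comp_apply, LinearMap.id_apply, Fintype.linearCombination_apply]
    using LinearMap.congr_fun hL c

theorem Submodule.mem_span_of_forall_dual {F V : Type*} [Field F] [AddCommGroup V] [Module F V]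
    {s : Set V} {y : V} (h : ∀ g : Module.Dual F V, (∀ v ∈ s, g v = 0) → g y = 0) :
    y ∈ span F s := by
  by_contra hy
  obtain ⟨g, hgy, hgs⟩ := exists_dual_map_eq_bot_of_notMem hy inferInstance
  refine hgy (h g fun v hv ↦ ?_)
  simpa [hgs] using mem_map_of_mem (f := g) (subset_span hv)

theorem exists_eq_sum_smul_norm_le_of_linearIndependent {ι F V : Type*} [Fintype ι]
    [NormedField F] [AddCommGroup V] [Module F V] {b : ι → V} (hb : LinearIndependent F b)
    {d : ι → ℝ} (hd : ∀ j, 0 ≤ d j) {y : V}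
    (h : ∀ g : Module.Dual F V, ‖g y‖ ≤ ⨆ j, d j * ‖g (b j)‖) :
    ∃ β : ι → F, y = ∑ j, β j • b j ∧ ∀ j, ‖β j‖ ≤ d j := by
  classical
  have hy : y ∈ Submodule.span F (Set.range b) := by
    refine Submodule.mem_span_of_forall_dual fun g hg ↦ norm_le_zero_iff.mp ?_
    simpa [hg] using h g
  obtain ⟨β, rfl⟩ := (Submodule.mem_span_range_iff_exists_fun F).mp hy
  obtain ⟨L, hL⟩ := hb.exists_linearMap_apply_sum_smul
  have hLb : ∀ k, L (b k) = Pi.single k 1 := fun k ↦ by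
    simpa [Pi.single_apply] using hL (Pi.single k 1)
  refine ⟨β, rfl, fun j ↦ ?_⟩
  calc ‖β j‖ = ‖(LinearMap.proj j ∘ₗ L) (∑ k, β k • b k)‖ := by
        rw [LinearMap.comp_apply, hL, LinearMap.proj_apply]
    _ ≤ ⨆ k, d k * ‖(LinearMap.proj j ∘ₗ L) (b k)‖ := h _
    _ ≤ d j := by
      refine Real.iSup_le (fun k ↦ ?_) (hd j)
      rcases eq_or_ne k j with rfl | hkj
      · simp [hLb]
      · simp [hLb, hkj, hd j]

theorem mul_norm_le_iSup_succAbove_of_sum_mul_eq_zero {m : ℕ} {F : Type*} [NormedField F]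
    [IsUltrametricDist F] {γ z : Fin (m + 1) → F} (hsum : ∑ k, γ k * z k = 0)
    {d : Fin (m + 1) → ℝ} {js : Fin (m + 1)} (hd : 0 ≤ d js) (hγ : γ js ≠ 0)
    (hjs : ∀ k, ‖γ k‖ * d js ≤ ‖γ js‖ * d k) :
    d js * ‖z js‖ ≤ ⨆ i, d (js.succAbove i) * ‖z (js.succAbove i)‖ := by
  have hγpos : 0 < ‖γ js‖ := norm_pos_iff.mpr hγ
  rw [Fin.sum_univ_succAbove _ js, add_eq_zero_iff_eq_neg] at hsum
  refine le_of_mul_le_mul_left ?_ hγpos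
  calc ‖γ js‖ * (d js * ‖z js‖) = d js * ‖∑ i, γ (js.succAbove i) * z (js.succAbove i)‖ := by
        rw [← norm_neg (∑ i, _), ← hsum, norm_mul]; ring
    _ ≤ d js * ⨆ i, ‖γ (js.succAbove i) * z (js.succAbove i)‖ :=
        mul_le_mul_of_nonneg_left (IsUltrametricDist.norm_sum_le_iSup _) hd
    _ = ⨆ i, ‖γ (js.succAbove i)‖ * d js * ‖z (js.succAbove i)‖ := by
        rw [Real.mul_iSup_of_nonneg hd]; simp only [norm_mul]; ring_nf
    _ ≤ ⨆ i, ‖γ js‖ * d (js.succAbove i) * ‖z (js.succAbove i)‖ :=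
        ciSup_mono (Finite.bddAbove_range _) fun i ↦
          mul_le_mul_of_nonneg_right (hjs _) (norm_nonneg _)
    _ = ‖γ js‖ * ⨆ i, d (js.succAbove i) * ‖z (js.succAbove i)‖ := by
        rw [Real.mul_iSup_of_nonneg hγpos.le]; simp only [mul_assoc]

theorem exists_mul_norm_dual_le_iSup_succAbove {m : ℕ} {F V : Type*} [NormedField F]
    [IsUltrametricDist F] [AddCommGroup V] [Module F V] {b : Fin (m + 1) → V}
    (hb : ¬ LinearIndependent F b) {d : Fin (m + 1) → ℝ} (hd : ∀ j, 0 ≤ d j) :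
    ∃ js, ∀ g : Module.Dual F V,
      d js * ‖g (b js)‖ ≤ ⨆ i, d (js.succAbove i) * ‖g (b (js.succAbove i))‖ := by
  obtain ⟨γ, hγb, j₀, hj₀⟩ := Fintype.not_linearIndependent_iff.mp hb
  by_cases hd0 : ∃ js, d js = 0
  · obtain ⟨js, hjs⟩ := hd0
    refine ⟨js, fun g ↦ ?_⟩
    rw [hjs, zero_mul]
    exact Real.iSup_nonneg fun i ↦ mul_nonneg (hd _) (norm_nonneg _)
  have hdpos : ∀ j, 0 < d j := fun j ↦ (hd j).lt_of_ne' fun h ↦ hd0 ⟨j, h⟩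
  obtain ⟨js, hjs⟩ := Finite.exists_max fun k ↦ ‖γ k‖ / d k
  have hγ : γ js ≠ 0 := by
    have := (div_pos (norm_pos_iff.mpr hj₀) (hdpos j₀)).trans_le (hjs j₀)
    exact norm_pos_iff.mp ((div_pos_iff_of_pos_right (hdpos js)).mp this)
  refine ⟨js, fun g ↦ mul_norm_le_iSup_succAbove_of_sum_mul_eq_zero (z := fun k ↦ g (b k)) ?_
    (hd js) hγ fun k ↦ ?_⟩
  · simpa [map_sum] using congr(g $hγb)
  · exact (div_le_div_iff₀ (hdpos k) (hdpos js)).mp (hjs k)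

theorem exists_eq_sum_smul_norm_le_of_forall_dual {m : ℕ} {F V : Type*} [NormedField F]
    [IsUltrametricDist F] [AddCommGroup V] [Module F V] (b : Fin m → V) {d : Fin m → ℝ}
    (hd : ∀ j, 0 ≤ d j) {y : V} (h : ∀ g : Module.Dual F V, ‖g y‖ ≤ ⨆ j, d j * ‖g (b j)‖) :
    ∃ β : Fin m → F, y = ∑ j, β j • b j ∧ ∀ j, ‖β j‖ ≤ d j := by
  induction m with
  | zero => exact exists_eq_sum_smul_norm_le_of_linearIndependent linearIndependent_empty_type hd h
  | succ m ih =>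
    by_cases hb : LinearIndependent F b
    · exact exists_eq_sum_smul_norm_le_of_linearIndependent hb hd h
    obtain ⟨js, hjs⟩ := exists_mul_norm_dual_le_iSup_succAbove hb hd
    have h' : ∀ g : Module.Dual F V,
        ‖g y‖ ≤ ⨆ i, d (js.succAbove i) * ‖g (b (js.succAbove i))‖ := fun g ↦ by
      refine (h g).trans (ciSup_le fun k ↦ ?_)
      rcases Fin.eq_self_or_eq_succAbove js k with rfl | ⟨i, rfl⟩
      · exact hjs g
      · exact le_ciSup (f := fun i ↦ d (js.succAbove i) * ‖g (b (js.succAbove i))‖)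
          (Finite.bddAbove_range _) i
    obtain ⟨β, rfl, hβ⟩ := ih (b ∘ js.succAbove) (fun i ↦ hd _) h'
    refine ⟨js.insertNth 0 β, ?_, fun k ↦ ?_⟩
    · simp [Fin.sum_univ_succAbove _ js]
    · rcases Fin.eq_self_or_eq_succAbove js k with rfl | ⟨i, rfl⟩
      · simpa using hd k
      · simpa using hβ i

theorem norm_le_iSup_of_forall_dual {m : ℕ} {F V : Type*} [NormedField F] [IsUltrametricDist F]
    [SeminormedAddCommGroup V] [NormedSpace F V] [IsUltrametricDist V] (b : Fin m → V)
    {d : Fin m → ℝ} (hd : ∀ j, 0 ≤ d j) {y : V}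
    (h : ∀ g : Module.Dual F V, ‖g y‖ ≤ ⨆ j, d j * ‖g (b j)‖) :
    ‖y‖ ≤ ⨆ j, d j * ‖b j‖ := by
  obtain ⟨β, rfl, hβ⟩ := exists_eq_sum_smul_norm_le_of_forall_dual b hd h
  refine (IsUltrametricDist.norm_sum_le_iSup _).trans
    (ciSup_mono (Finite.bddAbove_range _) fun j ↦ ?_)
  rw [norm_smul]
  exact mul_le_mul_of_nonneg_right (hβ j) (norm_nonneg _)

theorem TensorProduct.sum_dual_smul_eq_of_sum_tmul_eq {R M N ι κ : Type*} [CommSemiring R]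
    [AddCommMonoid M] [Module R M] [AddCommMonoid N] [Module R N] [Fintype ι] [Fintype κ]
    {x : ι → M} {y : ι → N} {a : κ → M} {b : κ → N}
    (h : ∑ i, x i ⊗ₜ[R] y i = ∑ j, a j ⊗ₜ[R] b j) (g : Module.Dual R N) :
    ∑ i, g (y i) • x i = ∑ j, g (b j) • a j := by
  simpa using congr(TensorProduct.rid R M (LinearMap.lTensor M g $h))

section projNorm

variable {F H K : Type*} [NormedField F] [NormedAddCommGroup H] [NormedSpace F H]
  [NormedAddCommGroup K] [NormedSpace F K]

theorem projNorm_sum_tmul_le {n : ℕ} (x : Fin n → H) (y : Fin n → K) :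
    projNorm (∑ i, x i ⊗ₜ[F] y i) ≤ ⨆ i, ‖x i‖ * ‖y i‖ := by
  refine csInf_le ⟨0, ?_⟩ ⟨n, x, y, rfl, rfl⟩
  rintro _ ⟨m, a, b, -, rfl⟩
  exact Real.iSup_nonneg fun j ↦ mul_nonneg (norm_nonneg _) (norm_nonneg _)

theorem le_projNorm_sum_tmul {n : ℕ} (x : Fin n → H) (y : Fin n → K) {c : ℝ}
    (h : ∀ (m : ℕ) (a : Fin m → H) (b : Fin m → K),
      ∑ i, x i ⊗ₜ[F] y i = ∑ j, a j ⊗ₜ[F] b j → c ≤ ⨆ j, ‖a j‖ * ‖b j‖) :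
    c ≤ projNorm (∑ i, x i ⊗ₜ[F] y i) := by
  refine le_csInf ⟨_, n, x, y, rfl, rfl⟩ ?_
  rintro _ ⟨m, a, b, hab, rfl⟩
  exact h m a b hab

theorem norm_mul_norm_le_of_sum_tmul_eq [IsUltrametricDist F] [IsUltrametricDist H]
    [IsUltrametricDist K] {ι : Type*} [Fintype ι] {x : ι → H}
    (hx : ∀ (α : ι → F) i, ‖α i • x i‖ ≤ ‖∑ k, α k • x k‖) {y : ι → K} {m : ℕ}
    {a : Fin m → H} {b : Fin m → K} (hab : ∑ i, x i ⊗ₜ[F] y i = ∑ j, a j ⊗ₜ[F] b j) (i : ι) :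
    ‖x i‖ * ‖y i‖ ≤ ⨆ j, ‖a j‖ * ‖b j‖ := by
  rcases (norm_nonneg (x i)).eq_or_lt with hx0 | hx0
  · rw [← hx0, zero_mul]
    exact Real.iSup_nonneg fun j ↦ mul_nonneg (norm_nonneg _) (norm_nonneg _)
  have hdual : ∀ g : Module.Dual F K, ‖g (y i)‖ ≤ ⨆ j, ‖x i‖⁻¹ * ‖a j‖ * ‖g (b j)‖ := by
    intro g
    simp_rw [mul_assoc, ← Real.mul_iSup_of_nonneg (inv_nonneg.mpr hx0.le)]
    rw [le_inv_mul_iff₀ hx0]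
    calc ‖x i‖ * ‖g (y i)‖ = ‖g (y i) • x i‖ := by rw [norm_smul, mul_comm]
      _ ≤ ‖∑ j, g (b j) • a j‖ := by
        rw [← TensorProduct.sum_dual_smul_eq_of_sum_tmul_eq hab]; exact hx (fun k ↦ g (y k)) i
      _ ≤ ⨆ j, ‖g (b j) • a j‖ := IsUltrametricDist.norm_sum_le_iSup _
      _ = ⨆ j, ‖a j‖ * ‖g (b j)‖ := by simp only [norm_smul, mul_comm]
  calc ‖x i‖ * ‖y i‖ ≤ ‖x i‖ * ⨆ j, ‖x i‖⁻¹ * ‖a j‖ * ‖b j‖ := by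
        gcongr
        exact norm_le_iSup_of_forall_dual b (fun j ↦ by positivity) hdual
    _ = ⨆ j, ‖a j‖ * ‖b j‖ := by
        rw [Real.mul_iSup_of_nonneg hx0.le]
        congr 1 with j
        field_simp

end projNorm

/-- If `{x₁, …, xₙ}` is a finite norm-orthogonal system in the ultrametric
normed space `H` (i.e. `‖Σᵢ αᵢ • xᵢ‖ = maxᵢ ‖αᵢ • xᵢ‖` for all scalars), then for any
`y₁, …, yₙ` in `K` the projective norm satisfies
`‖Σᵢ xᵢ ⊗ yᵢ‖_π = maxᵢ ‖xᵢ‖·‖yᵢ‖`. -/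
theorem projNorm_sum_tmul_of_norm_orthogonal
    {F H K : Type*} [NormedField F] [IsUltrametricDist F]
    [NormedAddCommGroup H] [NormedSpace F H] [IsUltrametricDist H]
    [NormedAddCommGroup K] [NormedSpace F K] [IsUltrametricDist K]
    {n : ℕ} (x : Fin n → H)
    (hx : ∀ α : Fin n → F, ‖∑ i, α i • x i‖ = ⨆ i, ‖α i • x i‖)
    (y : Fin n → K) :
    projNorm (∑ i, x i ⊗ₜ[F] y i) = ⨆ i, ‖x i‖ * ‖y i‖ := by
  have horth : ∀ (α : Fin n → F) i, ‖α i • x i‖ ≤ ‖∑ k, α k • x k‖ := fun α i ↦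
    (hx α).symm ▸ le_ciSup (Finite.bddAbove_range fun i ↦ ‖α i • x i‖) i
  refine le_antisymm (projNorm_sum_tmul_le x y) (le_projNorm_sum_tmul x y fun m a b hab ↦ ?_)
  exact Real.iSup_le (norm_mul_norm_le_of_sum_tmul_eq horth hab)
    (Real.iSup_nonneg fun j ↦ mul_nonneg (norm_nonneg _) (norm_nonneg _))
end

section
/- Let H and K be p-adic Hilbert spaces (ultrametric Banach spaces in which every finitely generated subspace admits a norm-orthogonal basis). Then the projective seminorm ‖·‖_π on the algebraic tensor product H ⊗ K is a norm: ‖u‖_π = 0 implies u = 0. -/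
open scoped TensorProduct

/-- Every finitely generated subspace admits a norm-orthogonal basis: for each finite
family of vectors, the subspace it spans is also spanned by a norm-orthogonal system. -/
def FinDimOrthogonalizable (F E : Type*) [NormedField F]
    [NormedAddCommGroup E] [NormedSpace F E] : Prop :=
  ∀ (n : ℕ) (v : Fin n → E), ∃ (m : ℕ) (b : Fin m → E),
    Submodule.span F (Set.range v) = Submodule.span F (Set.range b) ∧
    ∀ α : Fin m → F, ‖∑ i, α i • b i‖ = ⨆ i, ‖α i • b i‖

/-!
Fix a representation `u = ∑ xᵢ ⊗ yᵢ` with `(yᵢ)` norm-orthogonal, and let `u = ∑ aⱼ ⊗ bⱼ` be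
any other one. Orthogonalize the span of the `aⱼ` and `xᵢ`, and let `φ` be the coordinate
functional of a basis vector `d` carrying the largest component of `xᵢ`; then
`‖φ xᵢ‖ ‖d‖ = ‖xᵢ‖` while `‖φ h‖ ‖d‖ ≤ ‖h‖` on that span. Applying `φ ⊗ id` to both
representations, orthogonality of `(yᵢ)` and the ultrametric inequality in `K` give
`‖xᵢ‖ ‖yᵢ‖ ≤ maxⱼ ‖aⱼ‖ ‖bⱼ‖`. Hence `‖xᵢ‖ ‖yᵢ‖ ≤ ‖u‖_π` for every `i`, and `‖u‖_π = 0`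
forces every `xᵢ ⊗ yᵢ` to vanish.
-/

open Submodule Set

def IsNormOrthogonal (F : Type*) {E : Type*} [NormedField F] [NormedAddCommGroup E]
    [NormedSpace F E] {p : ℕ} (d : Fin p → E) : Prop :=
  ∀ α : Fin p → F, ‖∑ k, α k • d k‖ = ⨆ k, ‖α k • d k‖

namespace IsNormOrthogonal

variable {F E : Type*} [NormedField F] [NormedAddCommGroup E] [NormedSpace F E] {p : ℕ}
  {d : Fin p → E}

theorem norm_smul_le_norm_sum (hd : IsNormOrthogonal F d) (α : Fin p → F) (k : Fin p) :
    ‖α k • d k‖ ≤ ‖∑ i, α i • d i‖ := by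
  rw [hd α]
  exact le_ciSup (f := fun k => ‖α k • d k‖) (finite_range _).bddAbove k

theorem linearIndepOn (hd : IsNormOrthogonal F d) : LinearIndepOn F d {k | d k ≠ 0} := by
  rw [linearIndepOn_iff]
  intro l hl hl0
  ext k
  have hsum : ∑ i, l i • d i = 0 := by
    simpa [Finsupp.linearCombination_apply, Finsupp.sum_fintype] using hl0
  have hlk := hd.norm_smul_le_norm_sum l k
  rw [hsum, norm_zero, norm_le_zero_iff, smul_eq_zero] at hlk
  by_cases hk : d k = 0
  · exact Finsupp.notMem_support_iff.1 fun hmem => hl hmem hk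
  · exact hlk.resolve_right hk

theorem exists_coord (hd : IsNormOrthogonal F d) {k₀ : Fin p} (hk₀ : d k₀ ≠ 0) :
    ∃ φ : E →ₗ[F] F, ∀ α : Fin p → F, φ (∑ k, α k • d k) = α k₀ := by
  classical
  have hli : LinearIndependent F (fun k : {k | d k ≠ 0} => d k) := hd.linearIndepOn
  obtain ⟨φ, hφ⟩ := (Finsupp.lapply ⟨k₀, hk₀⟩ ∘ₗ hli.repr).exists_extend
  have hφd : ∀ k, φ (d k) = if k = k₀ then 1 else 0 := by
    intro k
    by_cases hk : d k = 0
    · rw [hk, map_zero, if_neg (by rintro rfl; exact hk₀ hk)]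
    · have := LinearMap.congr_fun hφ ⟨d k, subset_span ⟨⟨k, hk⟩, rfl⟩⟩
      simpa [hli.repr_eq_single ⟨k, hk⟩ ⟨d k, _⟩ rfl, Finsupp.single_apply] using this
  exact ⟨φ, fun α => by simp [hφd]⟩

theorem exists_norming_linearMap (hd : IsNormOrthogonal F d) {h : E}
    (hh : h ∈ span F (range d)) :
    ∃ (φ : E →ₗ[F] F) (c : ℝ), 0 ≤ c ∧ ‖h‖ = ‖φ h‖ * c ∧
      ∀ h' ∈ span F (range d), ‖φ h'‖ * c ≤ ‖h'‖ := by
  obtain ⟨γ, rfl⟩ := (mem_span_range_iff_exists_fun F).1 hh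
  by_cases h0 : ∑ k, γ k • d k = 0
  · exact ⟨0, 0, le_rfl, by simp [h0], fun h' _ => by simp⟩
  obtain ⟨k, -, -⟩ := Finset.exists_ne_zero_of_sum_ne_zero h0
  have : Nonempty (Fin p) := ⟨k⟩
  obtain ⟨k₀, hk₀⟩ := exists_eq_ciSup_of_finite (f := fun k => ‖γ k • d k‖)
  have hnorm : ‖∑ k, γ k • d k‖ = ‖γ k₀‖ * ‖d k₀‖ := by rw [hd γ, ← hk₀, norm_smul]
  have hdk₀ : d k₀ ≠ 0 := fun h => h0 (norm_eq_zero.1 (by rw [hnorm, h, norm_zero, mul_zero]))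
  obtain ⟨φ, hφ⟩ := hd.exists_coord hdk₀
  refine ⟨φ, ‖d k₀‖, norm_nonneg _, by rw [hφ, hnorm], fun h' hh' => ?_⟩
  obtain ⟨α, rfl⟩ := (mem_span_range_iff_exists_fun F).1 hh'
  rw [hφ, ← norm_smul]
  exact hd.norm_smul_le_norm_sum α k₀

end IsNormOrthogonal

namespace TensorProduct

variable {R M N : Type*} [CommSemiring R] [AddCommMonoid M] [AddCommMonoid N] [Module R M]
  [Module R N]

theorem exists_fin_sum_tmul (u : M ⊗[R] N) :
    ∃ (n : ℕ) (x : Fin n → M) (y : Fin n → N), u = ∑ i, x i ⊗ₜ[R] y i := by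
  induction u with
  | zero => exact ⟨0, ![], ![], by simp⟩
  | tmul a b => exact ⟨1, ![a], ![b], by simp⟩
  | add v w hv hw =>
    obtain ⟨n₁, x₁, y₁, rfl⟩ := hv
    obtain ⟨n₂, x₂, y₂, rfl⟩ := hw
    exact ⟨n₁ + n₂, Fin.append x₁ x₂, Fin.append y₁ y₂, by simp [Fin.sum_univ_add]⟩

theorem exists_sum_tmul_eq_of_mem_span {m n : ℕ} (v : Fin m → M) (w : Fin m → N)
    (y : Fin n → N) (hw : ∀ j, w j ∈ span R (range y)) :
    ∃ x : Fin n → M, ∑ j, v j ⊗ₜ[R] w j = ∑ i, x i ⊗ₜ[R] y i := by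
  choose c hc using fun j => (mem_span_range_iff_exists_fun R).1 (hw j)
  refine ⟨fun i => ∑ j, c j i • v j, ?_⟩
  simp_rw [← hc, tmul_sum, sum_tmul, tmul_smul, smul_tmul']
  exact Finset.sum_comm

end TensorProduct

section ProjNorm

variable {F H K : Type*} [NormedField F] [NormedAddCommGroup H] [NormedSpace F H]
  [NormedAddCommGroup K] [NormedSpace F K]

theorem exists_sum_tmul_isNormOrthogonal_right (hK : FinDimOrthogonalizable F K)
    (u : H ⊗[F] K) :
    ∃ (n : ℕ) (x : Fin n → H) (y : Fin n → K), IsNormOrthogonal F y ∧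
      u = ∑ i, x i ⊗ₜ[F] y i := by
  obtain ⟨m, v, w, rfl⟩ := TensorProduct.exists_fin_sum_tmul u
  obtain ⟨n, y, hspan, hy⟩ := hK m w
  obtain ⟨x, hx⟩ := TensorProduct.exists_sum_tmul_eq_of_mem_span v w y
    fun j => hspan ▸ subset_span (mem_range_self j)
  exact ⟨n, x, y, hy, hx⟩

theorem le_projNorm {u : H ⊗[F] K} {r : ℝ}
    (h : ∀ (n : ℕ) (a : Fin n → H) (b : Fin n → K),
      u = ∑ j, a j ⊗ₜ[F] b j → r ≤ ⨆ j, ‖a j‖ * ‖b j‖) :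
    r ≤ projNorm u := by
  obtain ⟨n, a, b, hu⟩ := TensorProduct.exists_fin_sum_tmul u
  refine le_csInf ⟨_, n, a, b, hu, rfl⟩ ?_
  rintro r' ⟨m, a', b', hu', rfl⟩
  exact h m a' b' hu'

theorem norm_mul_norm_le_projNorm [IsUltrametricDist K] (hH : FinDimOrthogonalizable F H)
    {n : ℕ} (x : Fin n → H) {y : Fin n → K} (hy : IsNormOrthogonal F y) (i : Fin n) :
    ‖x i‖ * ‖y i‖ ≤ projNorm (∑ i, x i ⊗ₜ[F] y i) := by
  refine le_projNorm fun m a b hab => ?_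
  obtain ⟨p, d, hspan, hd⟩ := hH (m + n) (Fin.append a x)
  have hmem : ∀ z ∈ range (Fin.append a x), z ∈ span F (range d) :=
    fun z hz => hspan ▸ subset_span hz
  obtain ⟨φ, c, hc, hφx, hφ⟩ := IsNormOrthogonal.exists_norming_linearMap hd
    (hmem _ ⟨Fin.natAdd m i, Fin.append_right a x i⟩)
  have hφa : ∀ j, ‖φ (a j)‖ * c ≤ ‖a j‖ :=
    fun j => hφ _ (hmem _ ⟨Fin.castAdd n j, Fin.append_left a x j⟩)
  have hΦ : ∀ {q : ℕ} (a : Fin q → H) (b : Fin q → K),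
      TensorProduct.lid F K (φ.rTensor K (∑ j, a j ⊗ₜ[F] b j)) = ∑ j, φ (a j) • b j := by
    intros; simp
  calc ‖x i‖ * ‖y i‖ = ‖φ (x i) • y i‖ * c := by rw [hφx, norm_smul]; ring
    _ ≤ ‖∑ k, φ (x k) • y k‖ * c :=
      mul_le_mul_of_nonneg_right (hy.norm_smul_le_norm_sum (fun k => φ (x k)) i) hc
    _ = ‖∑ j, φ (a j) • b j‖ * c := by rw [← hΦ x y, hab, hΦ]
    _ ≤ (⨆ j, ‖φ (a j) • b j‖) * c := by
      gcongr
      simpa using IsUltrametricDist.norm_tsum_le fun j => φ (a j) • b j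
    _ = ⨆ j, ‖φ (a j)‖ * c * ‖b j‖ := by
      rw [Real.iSup_mul_of_nonneg hc]
      congr 1 with j
      rw [norm_smul]
      ring
    _ ≤ ⨆ j, ‖a j‖ * ‖b j‖ :=
      ciSup_mono (finite_range _).bddAbove fun j =>
        mul_le_mul_of_nonneg_right (hφa j) (norm_nonneg _)

end ProjNorm

theorem projNorm_eq_zero_imp_eq_zero_general
    {F H K : Type*} [NormedField F]
    [NormedAddCommGroup H] [NormedSpace F H]
    [NormedAddCommGroup K] [NormedSpace F K] [IsUltrametricDist K]
    (hH : FinDimOrthogonalizable F H) (hK : FinDimOrthogonalizable F K) :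
    ∀ u : H ⊗[F] K, projNorm u = 0 → u = 0 := by
  intro u hu
  obtain ⟨n, x, y, hy, rfl⟩ := exists_sum_tmul_isNormOrthogonal_right hK u
  refine Finset.sum_eq_zero fun i _ => ?_
  have hi := norm_mul_norm_le_projNorm hH x hy i
  rw [hu] at hi
  rcases mul_eq_zero.1 (le_antisymm hi (by positivity)) with hxi | hyi
  · rw [norm_eq_zero.1 hxi, TensorProduct.zero_tmul]
  · rw [norm_eq_zero.1 hyi, TensorProduct.tmul_zero]

/-- Let `H` and `K` be `p`-adic Hilbert spaces (ultrametric Banach spaces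
over a nonarchimedean field in which every finitely generated subspace admits a
norm-orthogonal basis). Then the projective seminorm `‖·‖_π` on `H ⊗ K` is a norm:
`‖u‖_π = 0` implies `u = 0`. -/
theorem projNorm_eq_zero_imp_eq_zero
    {F H K : Type*} [NormedField F] [IsUltrametricDist F] [CompleteSpace F]
    [NormedAddCommGroup H] [NormedSpace F H] [IsUltrametricDist H] [CompleteSpace H]
    [NormedAddCommGroup K] [NormedSpace F K] [IsUltrametricDist K] [CompleteSpace K]
    (hH : FinDimOrthogonalizable F H) (hK : FinDimOrthogonalizable F K) :
    ∀ u : H ⊗[F] K, projNorm u = 0 → u = 0 :=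
  projNorm_eq_zero_imp_eq_zero_general hH hK
end

section
/- Let H and K be p-adic Hilbert spaces with inner products ⟨·,·⟩_H and ⟨·,·⟩_K each satisfying the Cauchy–Schwarz inequality |⟨x,y⟩| ≤ ‖x‖·‖y‖. Then the sesquilinear form on H ⊗ K determined by ⟨x₁ ⊗ y₁, x₂ ⊗ y₂⟩ = ⟨x₁,x₂⟩_H · ⟨y₁,y₂⟩_K satisfies the Cauchy–Schwarz inequality with respect to the projective norm: |⟨u,v⟩| ≤ ‖u‖_π · ‖v‖_π for all u, v in the algebraic tensor product. -/
open scoped TensorProduct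

private lemma aux_inf_mul {c : ℝ} {U V : Set ℝ} (hU : U.Nonempty) (hV : V.Nonempty)
    (hU0 : ∀ r ∈ U, 0 ≤ r) (hV0 : ∀ s ∈ V, 0 ≤ s)
    (h : ∀ r ∈ U, ∀ s ∈ V, c ≤ r * s) : c ≤ sInf U * sInf V := by
  have hVinf : 0 ≤ sInf V := Real.sInf_nonneg hV0
  have step : ∀ r ∈ U, c ≤ r * sInf V := by
    intro r hr
    rcases eq_or_lt_of_le (hU0 r hr) with h0 | hpos
    · obtain ⟨s, hs⟩ := hV
      have := h r hr s hs
      rw [← h0] at this ⊢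
      simpa using this
    · rw [← div_le_iff₀' hpos]
      refine le_csInf hV fun s hs => ?_
      rw [div_le_iff₀' hpos]
      exact h r hr s hs
  rcases eq_or_lt_of_le hVinf with h0 | hpos
  · obtain ⟨r, hr⟩ := hU
    have := step r hr
    rw [← h0] at this ⊢
    simpa using this
  · rw [mul_comm, ← div_le_iff₀' hpos]
    refine le_csInf hU fun r hr => ?_
    rw [div_le_iff₀' hpos, mul_comm]
    exact step r hr

/-- Let `H`, `K` be `p`-adic Hilbert spaces with Hermitian sesquilinear
forms `BH`, `BK` satisfying the Cauchy–Schwarz inequality `|⟨x,y⟩| ≤ ‖x‖·‖y‖`.  Then the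
sesquilinear form `B` on `H ⊗ K` determined by
`B (x₁ ⊗ y₁) (x₂ ⊗ y₂) = BH x₁ x₂ · BK y₁ y₂` satisfies the Cauchy–Schwarz inequality
with respect to the projective norm: `|B u v| ≤ ‖u‖_π · ‖v‖_π`. -/
theorem tensor_inner_cauchySchwarz
    {F H K : Type*} [NormedField F] [StarRing F] [IsUltrametricDist F]
    [NormedAddCommGroup H] [NormedSpace F H] [IsUltrametricDist H]
    [NormedAddCommGroup K] [NormedSpace F K] [IsUltrametricDist K]
    (BH : H →ₗ⋆[F] H →ₗ[F] F) (BK : K →ₗ⋆[F] K →ₗ[F] F)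
    (hBH_herm : ∀ a b : H, BH a b = star (BH b a))
    (hBK_herm : ∀ a b : K, BK a b = star (BK b a))
    (hBH_cs : ∀ a b : H, ‖BH a b‖ ≤ ‖a‖ * ‖b‖)
    (hBK_cs : ∀ a b : K, ‖BK a b‖ ≤ ‖a‖ * ‖b‖)
    (B : (H ⊗[F] K) →ₗ⋆[F] (H ⊗[F] K) →ₗ[F] F)
    (hB : ∀ (x₁ : H) (y₁ : K) (x₂ : H) (y₂ : K),
      B (x₁ ⊗ₜ[F] y₁) (x₂ ⊗ₜ[F] y₂) = BH x₁ x₂ * BK y₁ y₂) :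
    ∀ u v : H ⊗[F] K, ‖B u v‖ ≤ projNorm u * projNorm v := by
  intro u v
  -- The defining set is nonempty for any tensor.
  have hne : ∀ w : H ⊗[F] K, ∃ (n : ℕ) (x : Fin n → H) (y : Fin n → K),
      w = ∑ i, x i ⊗ₜ[F] y i := by
    intro w
    obtain ⟨S, hS⟩ := TensorProduct.exists_finset w
    refine ⟨S.card, fun i => (S.equivFin.symm i : H × K).1,
      fun i => (S.equivFin.symm i : H × K).2, ?_⟩
    rw [hS, ← Finset.sum_coe_sort (s := S),
      ← Equiv.sum_comp S.equivFin.symm (fun p : S => (p : H × K).1 ⊗ₜ[F] (p : H × K).2)]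
  set U := {r : ℝ | ∃ (n : ℕ) (x : Fin n → H) (y : Fin n → K),
    u = ∑ i, x i ⊗ₜ[F] y i ∧ r = ⨆ i, ‖x i‖ * ‖y i‖} with hUdef
  set V := {r : ℝ | ∃ (n : ℕ) (x : Fin n → H) (y : Fin n → K),
    v = ∑ i, x i ⊗ₜ[F] y i ∧ r = ⨆ i, ‖x i‖ * ‖y i‖} with hVdef
  have hUne : U.Nonempty := by
    obtain ⟨n, x, y, hxy⟩ := hne u
    exact ⟨_, n, x, y, hxy, rfl⟩
  have hVne : V.Nonempty := by
    obtain ⟨n, x, y, hxy⟩ := hne v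
    exact ⟨_, n, x, y, hxy, rfl⟩
  have hnonneg : ∀ (W : Set ℝ),
      W = {r : ℝ | ∃ (n : ℕ) (x : Fin n → H) (y : Fin n → K),
        (∑ i, x i ⊗ₜ[F] y i : H ⊗[F] K) = ∑ i, x i ⊗ₜ[F] y i ∧
        r = ⨆ i, ‖x i‖ * ‖y i‖} → True := fun _ _ => trivial
  have hU0 : ∀ r ∈ U, 0 ≤ r := by
    rintro r ⟨n, x, y, -, rfl⟩
    exact Real.iSup_nonneg fun i => mul_nonneg (norm_nonneg _) (norm_nonneg _)
  have hV0 : ∀ r ∈ V, 0 ≤ r := by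
    rintro r ⟨n, x, y, -, rfl⟩
    exact Real.iSup_nonneg fun i => mul_nonneg (norm_nonneg _) (norm_nonneg _)
  refine aux_inf_mul hUne hVne hU0 hV0 ?_
  rintro r ⟨n, x, y, hu, rfl⟩ s ⟨m, x', y', hv, rfl⟩
  have hr0 : 0 ≤ ⨆ i, ‖x i‖ * ‖y i‖ :=
    Real.iSup_nonneg fun i => mul_nonneg (norm_nonneg _) (norm_nonneg _)
  have hs0 : 0 ≤ ⨆ j, ‖x' j‖ * ‖y' j‖ :=
    Real.iSup_nonneg fun i => mul_nonneg (norm_nonneg _) (norm_nonneg _)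
  have key : B u v = ∑ i : Fin n, ∑ j : Fin m, BH (x i) (x' j) * BK (y i) (y' j) := by
    rw [hu, hv]
    simp only [map_sum, LinearMap.sum_apply, hB]
    exact Finset.sum_comm
  rw [key]
  refine IsUltrametricDist.norm_sum_le_of_forall_le_of_nonneg
    (mul_nonneg hr0 hs0) fun i _ => ?_
  refine IsUltrametricDist.norm_sum_le_of_forall_le_of_nonneg
    (mul_nonneg hr0 hs0) fun j _ => ?_
  have h1 : ‖BH (x i) (x' j) * BK (y i) (y' j)‖ ≤
      (‖x i‖ * ‖y i‖) * (‖x' j‖ * ‖y' j‖) := by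
    rw [norm_mul]
    calc ‖BH (x i) (x' j)‖ * ‖BK (y i) (y' j)‖
        ≤ (‖x i‖ * ‖x' j‖) * (‖y i‖ * ‖y' j‖) :=
          mul_le_mul (hBH_cs _ _) (hBK_cs _ _) (norm_nonneg _)
            (mul_nonneg (norm_nonneg _) (norm_nonneg _))
      _ = (‖x i‖ * ‖y i‖) * (‖x' j‖ * ‖y' j‖) := by ring
  refine h1.trans (mul_le_mul ?_ ?_ (mul_nonneg (norm_nonneg _) (norm_nonneg _)) hr0)
  · exact le_ciSup (f := fun i => ‖x i‖ * ‖y i‖) (Set.Finite.bddAbove (Set.finite_range _)) i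
  · exact le_ciSup (f := fun j => ‖x' j‖ * ‖y' j‖) (Set.Finite.bddAbove (Set.finite_range _)) j
end

section
/- Let H and K be p-adic Hilbert spaces. If the sesquilinear form ⟨·,·⟩ on H ⊗ K defined on simple tensors by ⟨x₁⊗y₁, x₂⊗y₂⟩ = ⟨x₁,x₂⟩_H·⟨y₁,y₂⟩_K satisfies ⟨u,v⟩ = 0 for all simple tensors u, then v = 0; i.e., this sesquilinear form is non-degenerate. -/
open scoped TensorProduct

/-- Let `H` and `K` be `p`-adic Hilbert spaces, with non-degenerate
Hermitian sesquilinear forms `BH`, `BK`.  If the sesquilinear form `B` on `H ⊗ K`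
determined on simple tensors by `B (x₁ ⊗ y₁) (x₂ ⊗ y₂) = BH x₁ x₂ · BK y₁ y₂`
satisfies `B u v = 0` for every simple tensor `u`, then `v = 0`; i.e. this sesquilinear
form is non-degenerate. -/
theorem tensor_inner_nondegenerate
    {F H K : Type*} [NormedField F] [StarRing F]
    [NormedAddCommGroup H] [NormedSpace F H]
    [NormedAddCommGroup K] [NormedSpace F K]
    (BH : H →ₗ⋆[F] H →ₗ[F] F) (BK : K →ₗ⋆[F] K →ₗ[F] F)
    (hBH_herm : ∀ a b : H, BH a b = star (BH b a))
    (hBK_herm : ∀ a b : K, BK a b = star (BK b a))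
    (hBH_nd : ∀ b : H, (∀ a : H, BH a b = 0) → b = 0)
    (hBK_nd : ∀ b : K, (∀ a : K, BK a b = 0) → b = 0)
    (B : (H ⊗[F] K) →ₗ⋆[F] (H ⊗[F] K) →ₗ[F] F)
    (hB : ∀ (x₁ : H) (y₁ : K) (x₂ : H) (y₂ : K),
      B (x₁ ⊗ₜ[F] y₁) (x₂ ⊗ₜ[F] y₂) = BH x₁ x₂ * BK y₁ y₂)
    (v : H ⊗[F] K) (hv : ∀ (x : H) (y : K), B (x ⊗ₜ[F] y) v = 0) :
    v = 0 := by
  classical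
  set 𝒞 := Module.Basis.ofVectorSpace F K with h𝒞
  obtain ⟨c, rfl⟩ := TensorProduct.eq_repr_basis_right 𝒞 v
  -- show every coefficient vanishes
  have hc : ∀ i ∈ c.support, c i = 0 := by
    intro i hi
    apply hBH_nd
    intro a
    -- For every y : K, BK y (∑ j, BH a (c j) • 𝒞 j) = 0
    have key : ∀ y : K, BK y (c.sum fun j m => BH a m • 𝒞 j) = 0 := by
      intro y
      have h0 := hv a y
      rw [Finsupp.sum, map_sum] at h0
      rw [Finsupp.sum, map_sum, ← h0]
      refine Finset.sum_congr rfl fun j _ => ?_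
      rw [hB, map_smul, smul_eq_mul]
    have hz : (c.sum fun j m => BH a m • 𝒞 j) = 0 := hBK_nd _ key
    rw [Finsupp.sum] at hz
    exact linearIndependent_iff'.mp 𝒞.linearIndependent c.support _ hz i hi
  have : c = 0 := Finsupp.ext fun i => by
    by_cases h : i ∈ c.support
    · exact hc i h
    · simpa using Finsupp.notMem_support_iff.mp h
  simp [this]
end

section
/- Let Y be an ultrametric Banach space over a complete nonarchimedean field F, X ⊆ Y a closed subspace, and I a countable index set. Then the completed projective tensor product c₀(I,F) ⊗̂_π X embeds isometrically as a closed subspace of c₀(I,F) ⊗̂_π Y. -/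
open scoped TensorProduct ZeroAtInfty

namespace C0TensorAux

open scoped Classical

section ProjNorm

variable {F H K : Type*} [NormedField F]
    [NormedAddCommGroup H] [NormedSpace F H]
    [NormedAddCommGroup K] [NormedSpace F K]

/-- The set whose infimum is `projNorm`. -/
def projSet (u : H ⊗[F] K) : Set ℝ :=
  {r : ℝ | ∃ (n : ℕ) (x : Fin n → H) (y : Fin n → K),
    u = ∑ i, x i ⊗ₜ[F] y i ∧ r = ⨆ i, ‖x i‖ * ‖y i‖}

lemma projNorm_eq_sInf (u : H ⊗[F] K) : projNorm u = sInf (projSet u) := rfl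

lemma projSet_bddBelow (u : H ⊗[F] K) : BddBelow (projSet u) := by
  refine ⟨0, fun r hr => ?_⟩
  obtain ⟨n, x, y, -, rfl⟩ := hr
  exact Real.iSup_nonneg fun i => mul_nonneg (norm_nonneg _) (norm_nonneg _)

lemma mem_projSet {u : H ⊗[F] K} {ι : Type*} [Fintype ι] (x : ι → H) (y : ι → K)
    (hu : u = ∑ i, x i ⊗ₜ[F] y i) :
    (⨆ k : Fin (Fintype.card ι), ‖x ((Fintype.equivFin ι).symm k)‖ *
      ‖y ((Fintype.equivFin ι).symm k)‖) ∈ projSet u := by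
  refine ⟨Fintype.card ι, fun k => x ((Fintype.equivFin ι).symm k),
    fun k => y ((Fintype.equivFin ι).symm k), ?_, rfl⟩
  rw [hu, ← Equiv.sum_comp (Fintype.equivFin ι).symm (fun i => x i ⊗ₜ[F] y i)]

lemma projSet_nonempty (u : H ⊗[F] K) : (projSet u).Nonempty := by
  obtain ⟨S, hS⟩ := TensorProduct.exists_finset u
  exact ⟨_, mem_projSet (fun a : {z // z ∈ S} => (a : H × K).1)
    (fun a : {z // z ∈ S} => (a : H × K).2)
    (by rw [hS, ← Finset.sum_coe_sort S (fun i => i.1 ⊗ₜ[F] i.2)])⟩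

lemma projNorm_le_of_rep {u : H ⊗[F] K} {ι : Type*} [Fintype ι] (x : ι → H) (y : ι → K)
    (hu : u = ∑ i, x i ⊗ₜ[F] y i) {B : ℝ} (hB : 0 ≤ B)
    (hb : ∀ i, ‖x i‖ * ‖y i‖ ≤ B) : projNorm u ≤ B :=
  (csInf_le (projSet_bddBelow u) (mem_projSet x y hu)).trans
    (Real.iSup_le (fun k => hb _) hB)

end ProjNorm

section C0

variable {F : Type*} [NormedField F]
variable {I : Type*} [TopologicalSpace I] [DiscreteTopology I]

/-- The element of `C₀(I, F)` equal to `g` on `S` and `0` elsewhere. -/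
noncomputable def finSupp (S : Finset I) (g : I → F) : C₀(I, F) where
  toFun i := if i ∈ S then g i else 0
  continuous_toFun := continuous_of_discreteTopology
  zero_at_infty' := by
    rw [Filter.cocompact_eq_cofinite]
    refine Filter.Tendsto.congr' ?_ tendsto_const_nhds
    filter_upwards [S.finite_toSet.compl_mem_cofinite] with i hi
    simp only [Set.mem_compl_iff, Finset.mem_coe] at hi
    simp [hi]

@[simp] lemma finSupp_apply (S : Finset I) (g : I → F) (i : I) :
    finSupp S g i = if i ∈ S then g i else 0 := rfl

/-- Kronecker delta function in `C₀(I, F)`. -/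
noncomputable def delta (i : I) : C₀(I, F) := finSupp {i} (fun _ => (1 : F))

@[simp] lemma delta_apply (i j : I) :
    (delta i : C₀(I, F)) j = if j = i then 1 else 0 := by
  simp [delta, Finset.mem_singleton]

lemma c0_norm_le {M : Type*} [SeminormedAddCommGroup M] {f : C₀(I, M)} {C : ℝ}
    (hC : 0 ≤ C) (h : ∀ i, ‖f i‖ ≤ C) : ‖f‖ ≤ C := by
  rw [← ZeroAtInftyContinuousMap.norm_toBCF_eq_norm]
  exact (BoundedContinuousFunction.norm_le hC).2 h

lemma c0_apply_le_norm {M : Type*} [SeminormedAddCommGroup M] (f : C₀(I, M)) (i : I) :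
    ‖f i‖ ≤ ‖f‖ := by
  rw [← ZeroAtInftyContinuousMap.norm_toBCF_eq_norm]
  exact f.toBCF.norm_coe_le_norm i

lemma norm_delta_le (i : I) : ‖(delta i : C₀(I, F))‖ ≤ 1 :=
  c0_norm_le zero_le_one fun j => by by_cases h : j = i <;> simp [h]

/-- Coercion to functions as an additive monoid hom. -/
def coeHom : C₀(I, F) →+ (I → F) where
  toFun f := ⇑f
  map_zero' := rfl
  map_add' _ _ := rfl

lemma coe_sum {ι : Type*} (s : Finset ι) (f : ι → C₀(I, F)) (j : I) :
    (∑ i ∈ s, f i) j = ∑ i ∈ s, f i j := by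
  rw [← Finset.sum_apply j s (fun i => ⇑(f i))]
  exact congrFun (map_sum (coeHom (F := F) (I := I)) f s) j

lemma finSupp_eq_sum (S : Finset I) (g : C₀(I, F)) :
    finSupp S ⇑g = ∑ i : {z // z ∈ S}, g ↑i • (delta (↑i : I) : C₀(I, F)) := by
  ext j
  rw [coe_sum]
  simp only [ZeroAtInftyContinuousMap.coe_smul, Pi.smul_apply, delta_apply, smul_eq_mul,
    mul_ite, mul_one, mul_zero, finSupp_apply]
  rw [Finset.sum_coe_sort S (fun i => if j = i then g i else 0), Finset.sum_ite_eq]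

variable {K : Type*} [NormedAddCommGroup K] [NormedSpace F K]

/-- Evaluation of a tensor in `C₀(I,F) ⊗ K` at an index `i`, as a linear map. -/
noncomputable def evalT (i : I) : (C₀(I, F) ⊗[F] K) →ₗ[F] K :=
  TensorProduct.lift (LinearMap.mk₂ F (fun (a : C₀(I, F)) (y : K) => a i • y)
    (fun a b y => by
      simp only [ZeroAtInftyContinuousMap.coe_add, Pi.add_apply, add_smul])
    (fun c a y => by
      simp only [ZeroAtInftyContinuousMap.coe_smul, Pi.smul_apply, smul_eq_mul, mul_smul])
    (fun a y z => smul_add _ _ _)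
    (fun c a y => smul_comm _ _ _))

@[simp] lemma evalT_tmul (i : I) (a : C₀(I, F)) (y : K) :
    evalT i (a ⊗ₜ[F] y) = a i • y := rfl

end C0

section Key

variable {F : Type*} [NormedField F]
variable {I : Type*} [TopologicalSpace I] [DiscreteTopology I]
variable {Y : Type*} [NormedAddCommGroup Y] [NormedSpace F Y] [IsUltrametricDist Y]

/-- The key isometry lemma: the canonical map `C₀(I,F) ⊗ p → C₀(I,F) ⊗ Y` preserves the
projective seminorm. -/
theorem projNorm_map_eq (p : Submodule F Y) (u : C₀(I, F) ⊗[F] p) :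
    projNorm (TensorProduct.map LinearMap.id p.subtype u) = projNorm u := by
  classical
  refine le_antisymm ?_ ?_
  · -- easy direction: any representation of `u` gives one of its image
    refine csInf_le_csInf (projSet_bddBelow _) (projSet_nonempty u) ?_
    rintro r ⟨n, x, y, rfl, rfl⟩
    refine ⟨n, x, fun i => ((y i : p) : Y), ?_, rfl⟩
    rw [map_sum]
    exact Finset.sum_congr rfl fun i _ => by
      rw [TensorProduct.map_tmul]; rfl
  · -- hard direction
    refine le_csInf (projSet_nonempty _) ?_
    rintro s ⟨n, a, y, hTu, rfl⟩
    set r : ℝ := ⨆ j : Fin n, ‖a j‖ * ‖y j‖ with hrdef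
    have hr0 : 0 ≤ r := Real.iSup_nonneg fun j => mul_nonneg (norm_nonneg _) (norm_nonneg _)
    refine le_of_forall_pos_le_add fun ε hε => ?_
    obtain ⟨Sfin, hSfin⟩ := TensorProduct.exists_finset u
    set κ := {z // z ∈ Sfin}
    set b : κ → C₀(I, F) := fun k => (k : C₀(I, F) × p).1 with hb
    set x : κ → p := fun k => (k : C₀(I, F) × p).2 with hx
    have hu : u = ∑ k : κ, b k ⊗ₜ[F] x k := by
      rw [hSfin, ← Finset.sum_coe_sort Sfin (fun i => i.1 ⊗ₜ[F] i.2)]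
    -- choose the finite truncation set
    set D : ℝ := 1 + ∑ k : κ, ‖x k‖ with hD
    have hD0 : 0 < D := by
      have : (0 : ℝ) ≤ ∑ k : κ, ‖x k‖ :=
        Finset.sum_nonneg fun k _ => norm_nonneg _
      linarith
    have hxD : ∀ k, ‖x k‖ ≤ D := by
      intro k
      have h1 : ‖x k‖ ≤ ∑ k' : κ, ‖x k'‖ :=
        Finset.single_le_sum (f := fun k' => ‖x k'‖) (fun _ _ => norm_nonneg _)
          (Finset.mem_univ k)
      linarith
    set ε' : ℝ := ε / D with hε'def
    have hε' : 0 < ε' := div_pos hε hD0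
    have hfin : ∀ k : κ, {i : I | ε' ≤ ‖b k i‖}.Finite := by
      intro k
      have h1 := (b k).zero_at_infty'
      rw [Filter.cocompact_eq_cofinite] at h1
      have h2 := h1 (Metric.ball_mem_nhds (0 : F) hε')
      rw [Filter.mem_map, Filter.mem_cofinite] at h2
      convert h2 using 1
      ext i
      simp [Metric.mem_ball, dist_zero_right, not_lt]
    have hUfin : (⋃ k : κ, {i : I | ε' ≤ ‖b k i‖}).Finite := Set.finite_iUnion hfin
    set S : Finset I := hUfin.toFinset with hS
    have hSsmall : ∀ (k : κ) (i : I), i ∉ S → ‖b k i‖ < ε' := by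
      intro k i hi
      by_contra h
      exact hi (hUfin.mem_toFinset.2 (Set.mem_iUnion.2 ⟨k, not_lt.1 h⟩))
    -- pointwise values and tails
    set f : I → p := fun i => ∑ k : κ, b k i • x k with hf
    set t : κ → C₀(I, F) := fun k => b k - finSupp S ⇑(b k) with ht
    have htail : ∀ k, ‖t k‖ ≤ ε' := by
      intro k
      refine c0_norm_le hε'.le fun i => ?_
      simp only [ht, ZeroAtInftyContinuousMap.coe_sub, Pi.sub_apply, finSupp_apply]
      by_cases h : i ∈ S
      · simp [h, hε'.le]
      · simp only [h, if_neg, ite_false, sub_zero]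
        exact (hSsmall k i h).le
    -- the decomposition of u
    have hkey : u = (∑ i : {z // z ∈ S}, (delta (↑i : I) : C₀(I, F)) ⊗ₜ[F] f ↑i)
        + ∑ k : κ, t k ⊗ₜ[F] x k := by
      have h1 : ∀ k : κ, b k = finSupp S ⇑(b k) + t k := fun k => by
        simp [ht]
      calc u = ∑ k : κ, b k ⊗ₜ[F] x k := hu
        _ = ∑ k : κ, (finSupp S ⇑(b k) ⊗ₜ[F] x k + t k ⊗ₜ[F] x k) := by
            refine Finset.sum_congr rfl fun k _ => ?_
            rw [← TensorProduct.add_tmul, ← h1]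
        _ = (∑ k : κ, finSupp S ⇑(b k) ⊗ₜ[F] x k) + ∑ k : κ, t k ⊗ₜ[F] x k :=
            Finset.sum_add_distrib
        _ = _ := by
            congr 1
            have h2 : ∀ k : κ, finSupp S ⇑(b k) ⊗ₜ[F] x k
                = ∑ i : {z // z ∈ S}, (delta (↑i : I) : C₀(I, F)) ⊗ₜ[F] (b k ↑i • x k) := by
              intro k
              rw [finSupp_eq_sum, TensorProduct.sum_tmul]
              exact Finset.sum_congr rfl fun i _ => TensorProduct.smul_tmul _ _ _
            rw [Finset.sum_congr rfl (fun k _ => h2 k), Finset.sum_comm]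
            refine Finset.sum_congr rfl fun i _ => ?_
            rw [← TensorProduct.tmul_sum]
    -- the norm bound on the values f i
    have hfY : ∀ i : I, ((f i : p) : Y) = ∑ j : Fin n, a j i • y j := by
      intro i
      have e1 : evalT (K := Y) i (TensorProduct.map LinearMap.id p.subtype u)
          = ∑ k : κ, b k i • ((x k : p) : Y) := by
        rw [hu, map_sum, map_sum]
        refine Finset.sum_congr rfl fun k _ => ?_
        rw [TensorProduct.map_tmul]
        rfl
      have e2 : evalT (K := Y) i (TensorProduct.map LinearMap.id p.subtype u)
          = ∑ j : Fin n, a j i • y j := by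
        rw [hTu, map_sum]
        exact Finset.sum_congr rfl fun j _ => rfl
      have e3 : ((f i : p) : Y) = ∑ k : κ, b k i • ((x k : p) : Y) := by
        show p.subtype (∑ k : κ, b k i • x k) = _
        rw [map_sum]
        exact Finset.sum_congr rfl fun k _ => by rw [map_smul]; rfl
      rw [e3, ← e1, e2]
    have hfr : ∀ i : I, ‖f i‖ ≤ r := by
      intro i
      have hni : ‖f i‖ = ‖((f i : p) : Y)‖ := rfl
      rw [hni, hfY i]
      refine IsUltrametricDist.norm_sum_le_of_forall_le_of_nonneg hr0 fun j _ => ?_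
      rw [norm_smul]
      calc ‖a j i‖ * ‖y j‖ ≤ ‖a j‖ * ‖y j‖ :=
            mul_le_mul_of_nonneg_right (c0_apply_le_norm _ _) (norm_nonneg _)
        _ ≤ r := le_ciSup (f := fun j : Fin n => ‖a j‖ * ‖y j‖)
            (Set.Finite.bddAbove (Set.finite_range _)) j
    -- conclude
    refine projNorm_le_of_rep (ι := {z // z ∈ S} ⊕ κ)
      (Sum.elim (fun i => (delta (↑i : I) : C₀(I, F))) t)
      (Sum.elim (fun i => f ↑i) x) ?_ (by linarith) ?_
    · rw [Fintype.sum_sum_type]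
      exact hkey
    · rintro (i | k)
      · simp only [Sum.elim_inl]
        calc ‖(delta (↑i : I) : C₀(I, F))‖ * ‖f ↑i‖ ≤ 1 * r :=
              mul_le_mul (norm_delta_le _) (hfr _) (norm_nonneg _) zero_le_one
          _ = r := one_mul r
          _ ≤ r + ε := le_add_of_nonneg_right hε.le
      · simp only [Sum.elim_inr]
        calc ‖t k‖ * ‖x k‖ ≤ ε' * D :=
              mul_le_mul (htail k) (hxD k) (norm_nonneg _) hε'.le
          _ = ε := div_mul_cancel₀ ε hD0.ne'
          _ ≤ r + ε := le_add_of_nonneg_left hr0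

end Key

end C0TensorAux

open C0TensorAux in
/-- Let `Y` be an ultrametric Banach space over a complete
nonarchimedean field `F`, `p ⊆ Y` a closed subspace, and `I` a countable (discrete) index
set.  Then the completed projective tensor product `c₀(I,F) ⊗̂_π p` embeds isometrically
as a closed subspace of `c₀(I,F) ⊗̂_π Y`.  The completions are encoded abstractly: `TX`
(resp. `TY`) is any Banach space receiving the corresponding algebraic tensor product via
a projective-norm-isometric linear map with dense range; the embedding is induced by the
inclusion `p ↪ Y`. -/
theorem c0_tensor_closed_subspace
    {F Y I : Type*} [NormedField F] [CompleteSpace F] [IsUltrametricDist F]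
    [NormedAddCommGroup Y] [NormedSpace F Y] [CompleteSpace Y] [IsUltrametricDist Y]
    [TopologicalSpace I] [DiscreteTopology I] [Countable I]
    (p : Submodule F Y) (hp : IsClosed (p : Set Y))
    {TX TY : Type*} [NormedAddCommGroup TX] [NormedSpace F TX] [CompleteSpace TX]
    [NormedAddCommGroup TY] [NormedSpace F TY] [CompleteSpace TY]
    (jX : (C₀(I, F) ⊗[F] p) →ₗ[F] TX)
    (hjX_iso : ∀ u, ‖jX u‖ = projNorm u) (hjX_dense : DenseRange jX)
    (jY : (C₀(I, F) ⊗[F] Y) →ₗ[F] TY)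
    (hjY_iso : ∀ u, ‖jY u‖ = projNorm u) (hjY_dense : DenseRange jY) :
    ∃ L : TX →ₗᵢ[F] TY,
      (∀ u : C₀(I, F) ⊗[F] p,
        L (jX u) = jY (TensorProduct.map LinearMap.id p.subtype u)) ∧
      IsClosed (Set.range (⇑L)) := by
  classical
  have hT : ∀ u : C₀(I, F) ⊗[F] p,
      projNorm (TensorProduct.map LinearMap.id p.subtype u) = projNorm u :=
    fun u => projNorm_map_eq p u
  -- put the (pullback) projective seminorm on the algebraic tensor product
  letI : SeminormedAddCommGroup (C₀(I, F) ⊗[F] p) :=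
    SeminormedAddCommGroup.induced _ _ jX
  have hisoX : Isometry ⇑jX := AddMonoidHomClass.isometry_of_norm jX fun u => rfl
  have hui : IsUniformInducing ⇑jX := hisoX.isUniformInducing
  set glin : (C₀(I, F) ⊗[F] p) →ₗ[F] TY :=
    jY ∘ₗ TensorProduct.map LinearMap.id p.subtype with hglin
  have hgnorm : ∀ u, ‖glin u‖ = ‖u‖ := by
    intro u
    show ‖jY (TensorProduct.map LinearMap.id p.subtype u)‖ = ‖u‖
    rw [hjY_iso, hT]
    exact (hjX_iso u).symm
  have hgiso : Isometry ⇑glin := AddMonoidHomClass.isometry_of_norm glin hgnorm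
  have hgu : UniformContinuous ⇑glin := hgiso.uniformContinuous
  set h : TX → TY := (hui.isDenseInducing hjX_dense).extend ⇑glin with hh
  have hext : ∀ u, h (jX u) = glin u := fun u =>
    uniformly_extend_of_ind hui hjX_dense hgu u
  have hcont : Continuous h :=
    (uniformContinuous_uniformly_extend hui hjX_dense hgu).continuous
  have hadd : ∀ s t, h (s + t) = h s + h t := by
    refine DenseRange.induction_on₂ hjX_dense ?_ ?_
    · exact isClosed_eq (hcont.comp continuous_add)
        ((hcont.comp continuous_fst).add (hcont.comp continuous_snd))
    · intro u v
      rw [← map_add, hext, hext, hext, map_add]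
  have hsmul : ∀ (c : F) (s : TX), h (c • s) = c • h s := by
    intro c
    refine fun s => DenseRange.induction_on hjX_dense s ?_ ?_
    · exact isClosed_eq (hcont.comp (continuous_const_smul c)) (hcont.const_smul c)
    · intro u
      rw [← map_smul, hext, map_smul, hext]
  let Llin : TX →ₗ[F] TY :=
    { toFun := h, map_add' := hadd, map_smul' := hsmul }
  have hLnorm : ∀ s, ‖Llin s‖ = ‖s‖ := by
    refine fun s => DenseRange.induction_on hjX_dense s ?_ ?_
    · exact isClosed_eq hcont.norm continuous_norm
    · intro u
      show ‖h (jX u)‖ = ‖jX u‖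
      rw [hext]
      exact hgnorm u
  refine ⟨⟨Llin, hLnorm⟩, fun u => ?_, ?_⟩
  · show h (jX u) = _
    rw [hext]
    rfl
  · exact ((LinearIsometry.isometry ⟨Llin, hLnorm⟩).isClosedEmbedding).isClosed_range
end

section
/- Let H and K be p-adic Hilbert spaces with orthonormal bases {φᵢ} and {ψⱼ}. For every u in the completed tensor product H ⊗̂ K written as u = Σ_{i,j} λᵢⱼ φᵢ ⊗ ψⱼ, the coefficients satisfy λᵢⱼ = ⟨φᵢ ⊗ ψⱼ, u⟩ and the Parseval identity holds: ‖u‖_π = sup_{i,j} |λᵢⱼ|. -/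
open scoped TensorProduct

/-- Let `H` and `K` be `p`-adic Hilbert spaces with orthonormal bases
`{φᵢ}` and `{ψⱼ}`.  The completed tensor product `H ⊗̂ K` is encoded abstractly as a
Banach space `T` receiving the algebraic tensor product via a projective-norm-isometric
dense-range linear map `j`, equipped with an inner product `BT` satisfying
Cauchy–Schwarz and extending `⟨x₁⊗y₁, x₂⊗y₂⟩ = ⟨x₁,x₂⟩_H · ⟨y₁,y₂⟩_K`.  For every
`u ∈ H ⊗̂ K` written as `u = Σ_{i,j} λᵢⱼ • (φᵢ ⊗ ψⱼ)`, the coefficients satisfy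
`λᵢⱼ = ⟨φᵢ ⊗ ψⱼ, u⟩`, and the Parseval identity holds: `‖u‖_π = sup_{i,j} |λᵢⱼ|`. -/
theorem tensor_parseval
    {F H K : Type*} [NormedField F] [StarRing F] [NormedStarGroup F]
    [CompleteSpace F] [IsUltrametricDist F]
    [NormedAddCommGroup H] [NormedSpace F H] [CompleteSpace H] [IsUltrametricDist H]
    [NormedAddCommGroup K] [NormedSpace F K] [CompleteSpace K] [IsUltrametricDist K]
    (BH : H →ₗ⋆[F] H →ₗ[F] F) (BK : K →ₗ⋆[F] K →ₗ[F] F)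
    (hBH_cs : ∀ a b : H, ‖BH a b‖ ≤ ‖a‖ * ‖b‖)
    (hBK_cs : ∀ a b : K, ‖BK a b‖ ≤ ‖a‖ * ‖b‖)
    (φ : ℕ → H) (ψ : ℕ → K)
    (hφ_on : ∀ m n, BH (φ m) (φ n) = if m = n then 1 else 0)
    (hφ_rep : ∀ x : H, HasSum (fun m => BH (φ m) x • φ m) x)
    (hφ_pars : ∀ x : H, ‖x‖ = ⨆ m, ‖BH (φ m) x‖)
    (hψ_on : ∀ m n, BK (ψ m) (ψ n) = if m = n then 1 else 0)
    (hψ_rep : ∀ y : K, HasSum (fun m => BK (ψ m) y • ψ m) y)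
    (hψ_pars : ∀ y : K, ‖y‖ = ⨆ m, ‖BK (ψ m) y‖)
    {T : Type*} [NormedAddCommGroup T] [NormedSpace F T] [CompleteSpace T]
    (j : (H ⊗[F] K) →ₗ[F] T)
    (hj_iso : ∀ u, ‖j u‖ = projNorm u) (hj_dense : DenseRange j)
    (BT : T →ₗ⋆[F] T →ₗ[F] F)
    (hBT_cs : ∀ u v : T, ‖BT u v‖ ≤ ‖u‖ * ‖v‖)
    (hBT_simple : ∀ (x₁ : H) (y₁ : K) (x₂ : H) (y₂ : K),
      BT (j (x₁ ⊗ₜ[F] y₁)) (j (x₂ ⊗ₜ[F] y₂)) = BH x₁ x₂ * BK y₁ y₂) :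
    ∀ (u : T) (lam : ℕ × ℕ → F),
      HasSum (fun q : ℕ × ℕ => lam q • j (φ q.1 ⊗ₜ[F] ψ q.2)) u →
      (∀ q : ℕ × ℕ, lam q = BT (j (φ q.1 ⊗ₜ[F] ψ q.2)) u) ∧
      ‖u‖ = ⨆ q : ℕ × ℕ, ‖lam q‖ := by

  intro u lam hu
  -- basis vectors have norm ≤ 1
  have hφ1 : ∀ m, ‖φ m‖ ≤ 1 := by
    intro m
    rw [hφ_pars (φ m)]
    refine ciSup_le fun n => ?_
    rw [hφ_on]
    split_ifs <;> simp
  have hψ1 : ∀ m, ‖ψ m‖ ≤ 1 := by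
    intro m
    rw [hψ_pars (ψ m)]
    refine ciSup_le fun n => ?_
    rw [hψ_on]
    split_ifs <;> simp
  have hproj_le : ∀ (n : ℕ) (x : Fin n → H) (y : Fin n → K),
      projNorm (∑ i, x i ⊗ₜ[F] y i) ≤ ⨆ i, ‖x i‖ * ‖y i‖ := by
    intro n x y
    refine csInf_le ⟨0, fun r hr => ?_⟩ ⟨n, x, y, rfl, rfl⟩
    obtain ⟨n', x', y', -, rfl⟩ := hr
    exact Real.iSup_nonneg fun i => mul_nonneg (norm_nonneg _) (norm_nonneg _)
  have he1 : ∀ q : ℕ × ℕ, ‖j (φ q.1 ⊗ₜ[F] ψ q.2)‖ ≤ 1 := by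
    intro q
    rw [hj_iso]
    have h0 : φ q.1 ⊗ₜ[F] ψ q.2
        = ∑ i : Fin 1, (fun _ : Fin 1 => φ q.1) i ⊗ₜ[F] (fun _ : Fin 1 => ψ q.2) i := by
      simp
    rw [h0]
    refine le_trans (hproj_le 1 _ _) ?_
    rw [ciSup_const]
    exact mul_le_one₀ (hφ1 _) (norm_nonneg _) (hψ1 _)
  -- orthonormality of the image vectors
  have hBTe : ∀ q p : ℕ × ℕ,
      BT (j (φ q.1 ⊗ₜ[F] ψ q.2)) (j (φ p.1 ⊗ₜ[F] ψ p.2)) = if p = q then 1 else 0 := by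
    intro q p
    rw [hBT_simple, hφ_on, hψ_on]
    by_cases h1 : q.1 = p.1 <;> by_cases h2 : q.2 = p.2 <;>
      simp [h1, h2, Prod.ext_iff, eq_comm]
  -- coefficients are inner products
  have hlam : ∀ q : ℕ × ℕ, lam q = BT (j (φ q.1 ⊗ₜ[F] ψ q.2)) u := by
    intro q
    set L : T →L[F] F := LinearMap.mkContinuous (BT (j (φ q.1 ⊗ₜ[F] ψ q.2)))
      ‖j (φ q.1 ⊗ₜ[F] ψ q.2)‖ (fun v => hBT_cs _ v) with hL
    have h1 : HasSum (fun p : ℕ × ℕ => L (lam p • j (φ p.1 ⊗ₜ[F] ψ p.2))) (L u) :=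
      L.hasSum hu
    have h2 : (fun p : ℕ × ℕ => L (lam p • j (φ p.1 ⊗ₜ[F] ψ p.2)))
        = fun p : ℕ × ℕ => if p = q then lam q else 0 := by
      funext p
      show BT (j (φ q.1 ⊗ₜ[F] ψ q.2)) (lam p • j (φ p.1 ⊗ₜ[F] ψ p.2)) = _
      rw [map_smul, hBTe]
      by_cases h : p = q
      · subst h; simp
      · simp [h]
    rw [h2] at h1
    exact (hasSum_ite_eq q (lam q)).unique h1
  have hlam_le : ∀ q : ℕ × ℕ, ‖lam q‖ ≤ ‖u‖ := by
    intro q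
    rw [hlam q]
    calc ‖BT (j (φ q.1 ⊗ₜ[F] ψ q.2)) u‖ ≤ ‖j (φ q.1 ⊗ₜ[F] ψ q.2)‖ * ‖u‖ := hBT_cs _ _
    _ ≤ 1 * ‖u‖ := mul_le_mul_of_nonneg_right (he1 q) (norm_nonneg u)
    _ = ‖u‖ := one_mul _
  have hbddA : BddAbove (Set.range fun q : ℕ × ℕ => ‖lam q‖) := by
    refine ⟨‖u‖, ?_⟩
    rintro r ⟨q, rfl⟩
    exact hlam_le q
  refine ⟨hlam, le_antisymm ?_ (ciSup_le hlam_le)⟩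
  -- the partial sums are bounded by the sup of the coefficients
  have key : ∀ s : Finset (ℕ × ℕ),
      ‖∑ q ∈ s, lam q • j (φ q.1 ⊗ₜ[F] ψ q.2)‖ ≤ ⨆ q : ℕ × ℕ, ‖lam q‖ := by
    intro s
    have hC0 : 0 ≤ ⨆ q : ℕ × ℕ, ‖lam q‖ :=
      le_trans (norm_nonneg (lam (0, 0))) (le_ciSup hbddA (0, 0))
    set g : Fin s.card → ℕ × ℕ := fun i => (s.equivFin.symm i : ℕ × ℕ) with hg
    have hre : ∑ q ∈ s, lam q • j (φ q.1 ⊗ₜ[F] ψ q.2)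
        = j (∑ i : Fin s.card,
            (fun i => lam (g i) • φ (g i).1) i ⊗ₜ[F] (fun i => ψ (g i).2) i) := by
      rw [map_sum]
      rw [← Finset.sum_coe_sort s (fun q => lam q • j (φ q.1 ⊗ₜ[F] ψ q.2)),
        ← Equiv.sum_comp s.equivFin.symm
        (fun a : s => lam (a : ℕ × ℕ) • j (φ (a : ℕ × ℕ).1 ⊗ₜ[F] ψ (a : ℕ × ℕ).2))]
      refine Finset.sum_congr rfl fun i _ => ?_
      simp only [hg, ← TensorProduct.smul_tmul', map_smul]
    rw [hre, hj_iso]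
    refine le_trans (hproj_le _ _ _) ?_
    rcases isEmpty_or_nonempty (Fin s.card) with hE | hN
    · rw [Real.iSup_of_isEmpty]
      exact hC0
    · refine ciSup_le fun i => ?_
      rw [norm_smul]
      have h1 : ‖lam (g i)‖ * ‖φ (g i).1‖ ≤ ‖lam (g i)‖ :=
        mul_le_of_le_one_right (norm_nonneg _) (hφ1 _)
      have h2 : ‖lam (g i)‖ * ‖φ (g i).1‖ * ‖ψ (g i).2‖ ≤ ‖lam (g i)‖ * ‖φ (g i).1‖ :=
        mul_le_of_le_one_right (mul_nonneg (norm_nonneg _) (norm_nonneg _)) (hψ1 _)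
      exact le_trans (le_trans h2 h1) (le_ciSup hbddA (g i))
  exact le_of_tendsto' (Filter.Tendsto.norm hu) key
end
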